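/- Let I ⊆ ℝ be a nonempty open interval, κ > 0, and y : I → (0, ∞) infinitely differentiable. Suppose y admits two representations as in the mixed case: for each representation there are an integer n ≥ 1, pairwise distinct reals c_1,…,c_n > 0 (respectively c′_1,…,c′_n > 0 with {c′} = {c}), a constant x̄ (respectively x̄′), and differentiable positive functions x̂_i, r (respectively x̂′_i, r′) with x̂_i′ = −κ c_i y x̂_i, r′ = −κ r, and y = 1 − Σ_i x̂_i − r − x̄ on I. Let σ_k be the elementary symmetric polynomials in c_1,…,c_n (σ_0 = 1) and define B(t) = Σ_{k=0}^n (−1)^k β_k(t) σ_{n−k}. If there exists a nonempty open subinterval L ⊆ I with B(t) ≠ 0 for all t ∈ L, then x̄ = x̄′. -/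

import Mathlib

/-- The recursively defined functions `f_{(j,k)}`:
`f_{(1,1)}(t) = κ y(t)`, `f_{(j,k)} = (f_{(j,k−1)})′ − κ y f_{(j−1,k−1)}` for `(j,k) ≠ (1,1)`,
and `f_{(j,k)} = 0` whenever `j > k` or `j = 0` or `k = 0`. -/
noncomputable def fjk (κ : ℝ) (y : ℝ → ℝ) : ℕ → ℕ → ℝ → ℝ
  | 0, _ => 0
  | _, 0 => 0
  | 1, 1 => fun t => κ * y t
  | j + 1, k + 1 =>
    if j + 1 > k + 1 then 0
    else fun t => deriv (fjk κ y (j + 1) k) t - κ * y t * fjk κ y j k t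
  termination_by j k => k

/-- The functions `β_k`: `β_0 = 1`, `β_1 = 1/y`, and for `k ≥ 2`,
`β_k = (−Σ_{j=1}^{k−1} f_{(j,k)} β_j + (−1)^{k−1} κ^k) / ((−1)^{k+1} κ^k y^k)`. -/
noncomputable def betaF (κ : ℝ) (y : ℝ → ℝ) : ℕ → ℝ → ℝ
  | 0 => fun _ => 1
  | 1 => fun t => 1 / y t
  | k + 2 => fun t =>
      (-(∑ j ∈ (Finset.Icc 1 (k + 1)).attach,
          fjk κ y j.1 (k + 2) t * betaF κ y j.1 t) +
        (-1 : ℝ) ^ (k + 1) * κ ^ (k + 2)) /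
      ((-1 : ℝ) ^ (k + 3) * κ ^ (k + 2) * (y t) ^ (k + 2))
  termination_by k => k
  decreasing_by
    have := (Finset.mem_Icc.mp j.2).2
    omega

/-- The `k`-th elementary symmetric polynomial `σ_k` in `c_1, …, c_n` (with `σ_0 = 1`). -/
noncomputable def esymmR (n : ℕ) (c : Fin n → ℝ) (k : ℕ) : ℝ :=
  ∑ s ∈ (Finset.univ : Finset (Fin n)).powersetCard k, ∏ i ∈ s, c i

lemma constOnIoo {a b : ℝ} {f : ℝ → ℝ} (hf : ∀ t ∈ Set.Ioo a b, HasDerivAt f 0 t)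
    {s t : ℝ} (hs : s ∈ Set.Ioo a b) (ht : t ∈ Set.Ioo a b) : f s = f t := by
  refine (convex_Ioo a b).is_const_of_fderivWithin_eq_zero
    (fun z hz => ((hf z hz).differentiableAt).differentiableWithinAt) (fun z hz => ?_) hs ht
  rw [fderivWithin_of_isOpen isOpen_Ioo hz]
  have h1 := (hf z hz).hasFDerivAt.fderiv
  rw [h1]
  ext
  simp

lemma sumExpConst {a b : ℝ} (κ : ℝ) (hκ : 0 < κ) (y : ℝ → ℝ)
    (hypos : ∀ t ∈ Set.Ioo a b, 0 < y t) {t0 : ℝ} (ht0 : t0 ∈ Set.Ioo a b)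
    {ι : Type*} [DecidableEq ι] (s : Finset ι) (lam : ι → ℝ) :
    ∀ (v : ι → ℝ → ℝ) (C : ℝ),
    (∀ l ∈ s, 0 < lam l) →
    (∀ l ∈ s, ∀ t ∈ Set.Ioo a b, HasDerivAt (v l) (-(κ * lam l * y t) * v l t) t) →
    (∀ t ∈ Set.Ioo a b, (∑ l ∈ s, v l t) + C = 0) → C = 0 := by
  induction s using Finset.induction_on with
  | empty =>
    intro v C _ _ hsum
    have := hsum t0 ht0
    simpa using this
  | @insert l0 s' hl0 ih =>
    intro v C hpos hode hsum
    have hlam0 : (0:ℝ) < lam l0 := hpos l0 (Finset.mem_insert_self _ _)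
    have hkey : ∀ t ∈ Set.Ioo a b, ∑ l ∈ insert l0 s', lam l * v l t = 0 := by
      intro t ht
      have hd : HasDerivAt (fun z => (∑ l ∈ insert l0 s', v l z) + C)
          (∑ l ∈ insert l0 s', -(κ * lam l * y t) * v l t) t :=
        (HasDerivAt.fun_sum fun l hl => hode l hl t ht).add_const C
      have h0 : HasDerivAt (fun z => (∑ l ∈ insert l0 s', v l z) + C) 0 t := by
        have hev : (fun z => (∑ l ∈ insert l0 s', v l z) + C) =ᶠ[nhds t] (fun _ => (0:ℝ)) := by
          filter_upwards [isOpen_Ioo.mem_nhds ht] with z hz using hsum z hz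
        exact (hasDerivAt_const t (0:ℝ)).congr_of_eventuallyEq hev
      have hu := hd.unique h0
      have hfac : ∑ l ∈ insert l0 s', -(κ * lam l * y t) * v l t
          = (-(κ * y t)) * ∑ l ∈ insert l0 s', lam l * v l t := by
        rw [Finset.mul_sum]
        exact Finset.sum_congr rfl fun l _ => by ring
      rw [hfac] at hu
      have hne : -(κ * y t) ≠ 0 := by
        have := hypos t ht; nlinarith
      exact (mul_eq_zero.mp hu).resolve_left hne
    refine ih (fun l z => (1 - lam l / lam l0) * v l z) C
      (fun l hl => hpos l (Finset.mem_insert_of_mem hl))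
      (fun l hl t ht => ?_) (fun t ht => ?_)
    · have := (hode l (Finset.mem_insert_of_mem hl) t ht).const_mul (1 - lam l / lam l0)
      refine this.congr_deriv ?_
      ring
    · have h1 := hsum t ht
      have h2 := hkey t ht
      have e1 : ∑ l ∈ insert l0 s', (1 - lam l / lam l0) * v l t
          = (∑ l ∈ insert l0 s', v l t) - (1 / lam l0) * (∑ l ∈ insert l0 s', lam l * v l t) := by
        rw [Finset.mul_sum, ← Finset.sum_sub_distrib]
        exact Finset.sum_congr rfl fun l _ => by ring
      rw [Finset.sum_insert hl0] at e1
      have hz : (1:ℝ) - lam l0 / lam l0 = 0 := by field_simp; ring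
      rw [hz, zero_mul, zero_add] at e1
      rw [e1, h2]
      linarith

/-- Mixed-case identifiability of `x̄`: if the smooth positive output `y` admits two
representations `y = 1 − Σ_i x̂_i − r − x̄` (with the same set of distinct positive
imitative payoff values and the same `κ > 0`) and the function
`B(t) = Σ_{k=0}^n (−1)^k β_k(t) σ_{n−k}` does not vanish on some nonempty open
subinterval, then `x̄ = x̄′`. -/
theorem stmt_14 (a b : ℝ) (hab : a < b) (κ : ℝ) (hκ : 0 < κ) (y : ℝ → ℝ)
    (hy : ContDiffOn ℝ (⊤ : ℕ∞) y (Set.Ioo a b))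
    (hypos : ∀ t ∈ Set.Ioo a b, 0 < y t)
    (n : ℕ) (hn : 1 ≤ n)
    (c c' : Fin n → ℝ)
    (hc : ∀ i, 0 < c i) (hc' : ∀ i, 0 < c' i)
    (hcd : Function.Injective c) (hcd' : Function.Injective c')
    (hrange : Set.range c' = Set.range c)
    (xbar xbar' : ℝ)
    (x x' : Fin n → ℝ → ℝ) (r r' : ℝ → ℝ)
    (hxpos : ∀ i, ∀ t ∈ Set.Ioo a b, 0 < x i t)
    (hx'pos : ∀ i, ∀ t ∈ Set.Ioo a b, 0 < x' i t)
    (hrpos : ∀ t ∈ Set.Ioo a b, 0 < r t)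
    (hr'pos : ∀ t ∈ Set.Ioo a b, 0 < r' t)
    (hxode : ∀ i, ∀ t ∈ Set.Ioo a b, HasDerivAt (x i) (-κ * c i * y t * x i t) t)
    (hx'ode : ∀ i, ∀ t ∈ Set.Ioo a b, HasDerivAt (x' i) (-κ * c' i * y t * x' i t) t)
    (hrode : ∀ t ∈ Set.Ioo a b, HasDerivAt r (-κ * r t) t)
    (hr'ode : ∀ t ∈ Set.Ioo a b, HasDerivAt r' (-κ * r' t) t)
    (hrep : ∀ t ∈ Set.Ioo a b, y t = 1 - (∑ i, x i t) - r t - xbar)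
    (hrep' : ∀ t ∈ Set.Ioo a b, y t = 1 - (∑ i, x' i t) - r' t - xbar')
    (hB : ∃ a' b', a' < b' ∧ Set.Ioo a' b' ⊆ Set.Ioo a b ∧
      ∀ t ∈ Set.Ioo a' b',
        (∑ k ∈ Finset.range (n + 1),
          (-1 : ℝ) ^ k * betaF κ y k t * esymmR n c (n - k)) ≠ 0) :
    xbar = xbar' := by
  -- midpoint
  set t0 : ℝ := (a + b) / 2 with ht0def
  have ht0 : t0 ∈ Set.Ioo a b := by constructor <;> simp only [ht0def] <;> linarith
  -- matching of payoffs
  have hmex : ∀ i, ∃ j, c' j = c i := by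
    intro i
    have : c i ∈ Set.range c' := by rw [hrange]; exact ⟨i, rfl⟩
    exact this
  choose m hm using hmex
  have hminj : Function.Injective m := by
    intro i j hij
    apply hcd
    rw [← hm i, ← hm j, hij]
  have hmbij : Function.Bijective m := Finite.injective_iff_bijective.mp hminj
  -- the difference functions
  set u : Fin n → ℝ → ℝ := fun i z => x i z - x' (m i) z with hudef
  have hu : ∀ i, ∀ t ∈ Set.Ioo a b, HasDerivAt (u i) (-(κ * c i * y t) * u i t) t := by
    intro i t ht
    have h := (hxode i t ht).sub (hx'ode (m i) t ht)
    rw [hm i] at h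
    refine h.congr_deriv ?_
    simp only [hudef]
    ring
  have hsumx' : ∀ z : ℝ, (∑ i, x' (m i) z) = ∑ i, x' i z := fun z =>
    Fintype.sum_bijective m hmbij (fun i => x' (m i) z) (fun j => x' j z) (fun i => rfl)
  -- E0
  have E0 : ∀ t ∈ Set.Ioo a b, (∑ i, u i t) + (r t - r' t) + (xbar - xbar') = 0 := by
    intro t ht
    have h1 := hrep t ht
    have h2 := hrep' t ht
    have hsx : (∑ i, u i t) = (∑ i, x i t) - (∑ i, x' i t) := by
      simp only [hudef]
      rw [Finset.sum_sub_distrib, hsumx' t]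
    rw [hsx]
    linarith
  -- ratio of r - r' to r is constant
  set w : ℝ := (r t0 - r' t0) / r t0 with hwdef
  have hratio : ∀ t ∈ Set.Ioo a b, r t - r' t = w * r t := by
    have hg0 : ∀ t ∈ Set.Ioo a b, HasDerivAt (fun z => (r z - r' z) / r z) 0 t := by
      intro t ht
      have hrne : r t ≠ 0 := ne_of_gt (hrpos t ht)
      have hd := ((hrode t ht).sub (hr'ode t ht)).div (hrode t ht) hrne
      refine hd.congr_deriv ?_
      simp only [Pi.sub_apply]
      field_simp
      ring
    intro t ht
    have h := constOnIoo hg0 ht ht0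
    have hrne : r t ≠ 0 := ne_of_gt (hrpos t ht)
    rw [hwdef, ← h]
    field_simp
  -- E1
  have E1 : ∀ t ∈ Set.Ioo a b, y t * (∑ i, c i * u i t) + (r t - r' t) = 0 := by
    intro t ht
    have hd : HasDerivAt (fun z => (∑ i, u i z) + (r z - r' z) + (xbar - xbar'))
        ((∑ i, -(κ * c i * y t) * u i t) + (-κ * r t - -κ * r' t)) t :=
      ((HasDerivAt.fun_sum fun i _ => hu i t ht).fun_add ((hrode t ht).sub (hr'ode t ht))).add_const _
    have h0 : HasDerivAt (fun z => (∑ i, u i z) + (r z - r' z) + (xbar - xbar')) 0 t := by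
      have hev : (fun z => (∑ i, u i z) + (r z - r' z) + (xbar - xbar')) =ᶠ[nhds t]
          (fun _ => (0:ℝ)) := by
        filter_upwards [isOpen_Ioo.mem_nhds ht] with z hz using E0 z hz
      exact (hasDerivAt_const t (0:ℝ)).congr_of_eventuallyEq hev
    have hun := hd.unique h0
    have hfac : (-κ) * (y t * (∑ i, c i * u i t)) = ∑ i, -(κ * c i * y t) * u i t := by
      rw [Finset.mul_sum, Finset.mul_sum]
      exact Finset.sum_congr rfl fun i _ => by ring
    rw [← hfac] at hun
    have : (-κ) * (y t * (∑ i, c i * u i t) + (r t - r' t)) = 0 := by linarith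
    have hκne : (-κ) ≠ 0 := by linarith
    exact (mul_eq_zero.mp this).resolve_left hκne
  -- case split on w
  by_cases hw : w = 0
  · -- then r - r' ≡ 0 and the u's sum to a constant
    have hfin : xbar - xbar' = 0 := by
      refine sumExpConst κ hκ y hypos ht0 (Finset.univ : Finset (Fin n)) c u (xbar - xbar')
        (fun i _ => hc i) (fun i _ t ht => hu i t ht) (fun t ht => ?_)
      have h0 := E0 t ht
      have h1 := hratio t ht
      rw [hw, zero_mul] at h1
      linarith
    linarith
  · set A : ℝ := w * (1 - xbar) + (xbar - xbar') with hAdef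
    set V : ((Fin n) ⊕ (Fin n × Fin n)) → ℝ → ℝ :=
      Sum.elim (fun j z => (A * c j - w) * u j z)
        (fun p z => c p.2 * ((u p.1 z - w * x p.1 z) * u p.2 z)) with hVdef
    have hfin : -(w * (xbar - xbar')) = 0 := by
      refine sumExpConst κ hκ y hypos ht0
        (Finset.univ : Finset ((Fin n) ⊕ (Fin n × Fin n)))
        (Sum.elim c (fun p => c p.1 + c p.2)) V
        (-(w * (xbar - xbar'))) ?_ ?_ ?_
      · rintro (j | p) -
        · exact hc j
        · exact add_pos (hc p.1) (hc p.2)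
      · rintro (j | ⟨i, j⟩) - t ht
        · have := (hu j t ht).const_mul (A * c j - w)
          refine this.congr_deriv ?_
          simp only [hVdef, Sum.elim_inl]
          ring
        · have hp : HasDerivAt (fun z => u i z - w * x i z)
              (-(κ * c i * y t) * (u i t - w * x i t)) t := by
            have h := (hu i t ht).sub ((hxode i t ht).const_mul w)
            refine h.congr_deriv ?_
            ring
          have h2 := (hp.mul (hu j t ht)).const_mul (c j)
          refine h2.congr_deriv ?_
          simp only [hVdef, Sum.elim_inr]
          ring
      · intro t ht
        rw [Fintype.sum_sum_type]
        have hinl : (∑ j, V (Sum.inl j) t)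
            = A * (∑ j, c j * u j t) - w * (∑ j, u j t) := by
          simp only [hVdef, Sum.elim_inl]
          rw [Finset.mul_sum, Finset.mul_sum, ← Finset.sum_sub_distrib]
          exact Finset.sum_congr rfl fun j _ => by ring
        have hinr : (∑ p : Fin n × Fin n, V (Sum.inr p) t)
            = ((∑ i, u i t) - w * (∑ i, x i t)) * (∑ j, c j * u j t) := by
          simp only [hVdef, Sum.elim_inr]
          rw [Fintype.sum_prod_type]
          have step : ∀ i : Fin n, (∑ j, c j * ((u i t - w * x i t) * u j t))
              = (u i t - w * x i t) * (∑ j, c j * u j t) := by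
            intro i
            rw [Finset.mul_sum]
            exact Finset.sum_congr rfl fun j _ => by ring
          calc (∑ i, ∑ j, c j * ((u i t - w * x i t) * u j t))
              = ∑ i, (u i t - w * x i t) * (∑ j, c j * u j t) :=
                Finset.sum_congr rfl fun i _ => step i
            _ = (∑ i, (u i t - w * x i t)) * (∑ j, c j * u j t) := by
                rw [Finset.sum_mul]
            _ = ((∑ i, u i t) - w * (∑ i, x i t)) * (∑ j, c j * u j t) := by
                rw [Finset.sum_sub_distrib, ← Finset.mul_sum]
        rw [hinl, hinr]
        set S0 : ℝ := ∑ i, u i t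
        set S1 : ℝ := ∑ i, c i * u i t
        set X0 : ℝ := ∑ i, x i t
        have h1 : y t = 1 - X0 - r t - xbar := hrep t ht
        have hE2 : y t * S1 = S0 + (xbar - xbar') := by
          have ha := E1 t ht
          have hb := E0 t ht
          linarith
        have hE3 : w * r t = -(S0 + (xbar - xbar')) := by
          have ha := hratio t ht
          have hb := E0 t ht
          linarith
        rw [hAdef]
        linear_combination (-(w * S1)) * h1 + w * hE2 + S1 * hE3
    have : w * (xbar - xbar') = 0 := by linarith
    have := (mul_eq_zero.mp this).resolve_left hw
    linarith
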